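/- Let T_1 and T_2 be bounded linear operators on a complex Hilbert space H. Then ω²([[O, T_1],[T_2*, O]]) ≤ (1/2)( ω([[O, T_1* T_1],[T_2* T_1, O]]) + ω([[O, T_2* T_2],[T_1* T_2, O]]) ), where ω² denotes the square of the numerical radius. -/

import Mathlib

/-!
Write a unit vector of `H ⊕ H` as `z = (x, y)`, so `‖x‖² + ‖y‖² = 1`. The quadratic form of
`[[O, T₁], [T₂*, O]]` at `z` is `⟪T₁ y, x⟫ + conj ⟪T₂ y, x⟫`. Rotating `T₁ y` and `T₂ y` so that
the two inner products with `x` have the same phase, Cauchy–Schwarz bounds its modulus squared by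
`‖x‖² (‖T₁ y‖² + ‖T₂ y‖² + 2 |⟪T₁ y, T₂ y⟫|)`. Testing the operators on the right-hand side at
`(μ y, y)` for a suitable phase `μ` bounds `‖Tᵢ y‖² + |⟪T₁ y, T₂ y⟫|` by `2 ‖y‖²` times their
numerical radii, and `4 ‖x‖² ‖y‖² ≤ 1` concludes.
-/

open ContinuousLinearMap

/-- The numerical radius of a bounded linear operator on a complex inner product space:
`ω(T) = sup_{‖x‖ = 1} |⟨Tx, x⟩|`. -/
noncomputable def numRadius {H : Type*} [NormedAddCommGroup H] [InnerProductSpace ℂ H]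
    (T : H →L[ℂ] H) : ℝ :=
  ⨆ x : {x : H // ‖x‖ = 1}, ‖(inner ℂ (T x) (x : H) : ℂ)‖

/-- The operator matrix `[[O, A], [B, O]]` acting on the Hilbert space direct sum
`H ⊕ H`, sending `(x, y)` to `(A y, B x)`. -/
noncomputable def offDiagOp {H : Type*} [NormedAddCommGroup H] [InnerProductSpace ℂ H]
    (A B : H →L[ℂ] H) : WithLp 2 (H × H) →L[ℂ] WithLp 2 (H × H) :=
  (((WithLp.prodContinuousLinearEquiv 2 ℂ H H).symm :
        (H × H) →L[ℂ] WithLp 2 (H × H)).comp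
      ((A.comp (ContinuousLinearMap.snd ℂ H H)).prod
        (B.comp (ContinuousLinearMap.fst ℂ H H)))).comp
    ((WithLp.prodContinuousLinearEquiv 2 ℂ H H : WithLp 2 (H × H) ≃L[ℂ] H × H) :
      WithLp 2 (H × H) →L[ℂ] H × H)

open scoped ComplexConjugate InnerProductSpace

theorem sq_norm_inner_add_norm_inner_le {𝕜 E : Type*} [RCLike 𝕜] [NormedAddCommGroup E]
    [InnerProductSpace 𝕜 E] (u v x : E) :
    (‖⟪u, x⟫_𝕜‖ + ‖⟪v, x⟫_𝕜‖) ^ 2 ≤ ‖x‖ ^ 2 * (‖u‖ ^ 2 + ‖v‖ ^ 2 + 2 * ‖⟪u, v⟫_𝕜‖) := by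
  obtain ⟨a, ha, hau⟩ := RCLike.exists_norm_eq_mul_self ⟪u, x⟫_𝕜
  obtain ⟨b, hb, hbv⟩ := RCLike.exists_norm_eq_mul_self ⟪v, x⟫_𝕜
  set w := conj a • u + conj b • v
  have hw : ‖⟪u, x⟫_𝕜‖ + ‖⟪v, x⟫_𝕜‖ ≤ ‖w‖ * ‖x‖ := by
    have : ((‖⟪u, x⟫_𝕜‖ + ‖⟪v, x⟫_𝕜‖ : ℝ) : 𝕜) = ⟪w, x⟫_𝕜 := by
      simp only [w, inner_add_left, inner_smul_left, RCLike.conj_conj, RCLike.ofReal_add, hau, hbv]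
    calc ‖⟪u, x⟫_𝕜‖ + ‖⟪v, x⟫_𝕜‖ = ‖⟪w, x⟫_𝕜‖ := by
          rw [← this, RCLike.norm_ofReal, abs_of_nonneg (by positivity)]
      _ ≤ ‖w‖ * ‖x‖ := norm_inner_le_norm w x
  have hw_sq : ‖w‖ ^ 2 ≤ ‖u‖ ^ 2 + ‖v‖ ^ 2 + 2 * ‖⟪u, v⟫_𝕜‖ := by
    have hre : RCLike.re ⟪conj a • u, conj b • v⟫_𝕜 ≤ ‖⟪u, v⟫_𝕜‖ :=
      (RCLike.re_le_norm _).trans (by simp [inner_smul_left, inner_smul_right, ha, hb])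
    rw [norm_add_sq (𝕜 := 𝕜), norm_smul, norm_smul, RCLike.norm_conj, RCLike.norm_conj, ha, hb]
    linarith
  calc (‖⟪u, x⟫_𝕜‖ + ‖⟪v, x⟫_𝕜‖) ^ 2 ≤ (‖w‖ * ‖x‖) ^ 2 := by gcongr
    _ = ‖x‖ ^ 2 * ‖w‖ ^ 2 := by ring
    _ ≤ _ := by gcongr

theorem Complex.exists_norm_eq_one_norm_mul_add_conj_mul (a : ℝ) (ha : 0 ≤ a) (c : ℂ) :
    ∃ μ : ℂ, ‖μ‖ = 1 ∧ ‖μ * a + conj μ * c‖ = a + ‖c‖ := by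
  obtain ⟨γ, hγ, hγc⟩ := Complex.exists_norm_mul_eq_self c
  obtain ⟨μ, rfl⟩ := IsAlgClosed.exists_pow_nat_eq γ two_pos
  have hμ : ‖μ‖ = 1 := by
    rwa [norm_pow, pow_eq_one_iff_of_nonneg (norm_nonneg μ) two_ne_zero] at hγ
  refine ⟨μ, hμ, ?_⟩
  have hconj : conj μ * μ = 1 := by
    rw [← Complex.normSq_eq_conj_mul_self, Complex.normSq_eq_norm_sq, hμ]; norm_num
  have hc : conj μ * c = μ * ‖c‖ := by
    calc conj μ * c = conj μ * (μ ^ 2 * ‖c‖) := by rw [hγc]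
      _ = μ * ‖c‖ := by linear_combination (μ * ‖c‖ : ℂ) * hconj
  rw [hc, ← mul_add, ← Complex.ofReal_add, norm_mul, hμ, one_mul, Complex.norm_real,
    Real.norm_of_nonneg (by positivity)]

section NumRadius

variable {H : Type*} [NormedAddCommGroup H] [InnerProductSpace ℂ H]

theorem numRadius_nonneg (T : H →L[ℂ] H) : 0 ≤ numRadius T :=
  Real.iSup_nonneg fun _ => norm_nonneg _

theorem numRadius_le {T : H →L[ℂ] H} {r : ℝ} (hr : 0 ≤ r)
    (h : ∀ x : H, ‖x‖ = 1 → ‖⟪T x, x⟫_ℂ‖ ≤ r) : numRadius T ≤ r :=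
  Real.iSup_le (fun x => h x x.2) hr

theorem norm_inner_le_numRadius {T : H →L[ℂ] H} {x : H} (hx : ‖x‖ = 1) :
    ‖⟪T x, x⟫_ℂ‖ ≤ numRadius T := by
  refine le_ciSup (f := fun x : {x : H // ‖x‖ = 1} => ‖⟪T x, x⟫_ℂ‖) ⟨‖T‖, ?_⟩ ⟨x, hx⟩
  rintro _ ⟨⟨y, hy⟩, rfl⟩
  calc ‖⟪T y, y⟫_ℂ‖ ≤ ‖T y‖ * ‖y‖ := norm_inner_le_norm _ _
    _ ≤ ‖T‖ * ‖y‖ * ‖y‖ := by gcongr; exact T.le_opNorm y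
    _ = ‖T‖ := by rw [hy, mul_one, mul_one]

theorem norm_inner_le_numRadius_mul_sq (T : H →L[ℂ] H) (x : H) :
    ‖⟪T x, x⟫_ℂ‖ ≤ numRadius T * ‖x‖ ^ 2 := by
  rcases eq_or_ne x 0 with rfl | hx
  · simp
  have hx' : ‖x‖ ≠ 0 := norm_ne_zero_iff.mpr hx
  have hunit : ‖(‖x‖⁻¹ : ℂ) • x‖ = 1 := by
    rw [norm_smul, norm_inv, Complex.norm_real, norm_norm, inv_mul_cancel₀ hx']
  have := norm_inner_le_numRadius (T := T) hunit
  rw [map_smul, inner_smul_left, inner_smul_right, norm_mul, norm_mul, map_inv₀,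
    Complex.conj_ofReal, norm_inv, Complex.norm_real, norm_norm] at this
  field_simp at this
  linarith

end NumRadius

section OffDiag

variable {H : Type*} [NormedAddCommGroup H] [InnerProductSpace ℂ H]

theorem inner_offDiagOp (A B : H →L[ℂ] H) (z w : WithLp 2 (H × H)) :
    ⟪offDiagOp A B z, w⟫_ℂ = ⟪A z.snd, w.fst⟫_ℂ + ⟪B z.fst, w.snd⟫_ℂ :=
  rfl

variable [CompleteSpace H]

theorem norm_inner_offDiagOp_adjoint_le (A B : H →L[ℂ] H) (z : WithLp 2 (H × H)) :
    ‖⟪offDiagOp A (adjoint B) z, z⟫_ℂ‖ ≤ ‖⟪A z.snd, z.fst⟫_ℂ‖ + ‖⟪B z.snd, z.fst⟫_ℂ‖ := by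
  rw [inner_offDiagOp, adjoint_inner_left, ← inner_conj_symm (B z.snd)]
  exact (norm_add_le _ _).trans_eq (by rw [RCLike.norm_conj])

theorem sq_norm_add_norm_inner_le_numRadius_offDiagOp (A B : H →L[ℂ] H) (y : H) :
    ‖A y‖ ^ 2 + ‖⟪A y, B y⟫_ℂ‖ ≤
      2 * ‖y‖ ^ 2 * numRadius (offDiagOp (adjoint A ∘L A) (adjoint B ∘L A)) := by
  obtain ⟨μ, hμ, hsum⟩ := Complex.exists_norm_eq_one_norm_mul_add_conj_mul (‖A y‖ ^ 2)
    (sq_nonneg _) ⟪A y, B y⟫_ℂ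
  set w : WithLp 2 (H × H) := WithLp.toLp 2 (μ • y, y)
  have hw : ‖w‖ ^ 2 = 2 * ‖y‖ ^ 2 := by
    rw [WithLp.prod_norm_sq_eq_of_L2]
    simp only [w, WithLp.toLp_fst, WithLp.toLp_snd, norm_smul, hμ, one_mul]
    ring
  have hquad : ⟪offDiagOp (adjoint A ∘L A) (adjoint B ∘L A) w, w⟫_ℂ =
      μ * (‖A y‖ ^ 2 : ℝ) + conj μ * ⟪A y, B y⟫_ℂ := by
    simp only [inner_offDiagOp, w, WithLp.toLp_fst, WithLp.toLp_snd, coe_comp,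
      Function.comp_apply, adjoint_inner_left, map_smul, inner_smul_right, inner_smul_left,
      inner_self_eq_norm_sq_to_K]
    norm_cast
  calc ‖A y‖ ^ 2 + ‖⟪A y, B y⟫_ℂ‖
      = ‖⟪offDiagOp (adjoint A ∘L A) (adjoint B ∘L A) w, w⟫_ℂ‖ := by rw [hquad, hsum]
    _ ≤ _ := by rw [← hw, mul_comm]; exact norm_inner_le_numRadius_mul_sq _ w

end OffDiag

theorem numRadius_sq_offDiag_le
    {H : Type*} [NormedAddCommGroup H] [InnerProductSpace ℂ H] [CompleteSpace H]
    (T₁ T₂ : H →L[ℂ] H) :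
    numRadius (offDiagOp T₁ (adjoint T₂)) ^ 2 ≤
      (1 / 2) * (numRadius (offDiagOp (adjoint T₁ ∘L T₁) (adjoint T₂ ∘L T₁)) +
        numRadius (offDiagOp (adjoint T₂ ∘L T₂) (adjoint T₁ ∘L T₂))) := by
  set N₁ := numRadius (offDiagOp (adjoint T₁ ∘L T₁) (adjoint T₂ ∘L T₁))
  set N₂ := numRadius (offDiagOp (adjoint T₂ ∘L T₂) (adjoint T₁ ∘L T₂))
  have hN : 0 ≤ N₁ + N₂ := add_nonneg (numRadius_nonneg _) (numRadius_nonneg _)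
  rw [← Real.le_sqrt (numRadius_nonneg _) (by positivity)]
  refine numRadius_le (Real.sqrt_nonneg _) fun z hz => ?_
  rw [Real.le_sqrt (norm_nonneg _) (by positivity)]
  set x := z.fst
  set y := z.snd
  have hxy : ‖x‖ ^ 2 + ‖y‖ ^ 2 = 1 := by rw [← WithLp.prod_norm_sq_eq_of_L2, hz, one_pow]
  have h₁ := sq_norm_add_norm_inner_le_numRadius_offDiagOp T₁ T₂ y
  have h₂ := sq_norm_add_norm_inner_le_numRadius_offDiagOp T₂ T₁ y
  rw [norm_inner_symm] at h₂
  calc ‖⟪offDiagOp T₁ (adjoint T₂) z, z⟫_ℂ‖ ^ 2 ≤ (‖⟪T₁ y, x⟫_ℂ‖ + ‖⟪T₂ y, x⟫_ℂ‖) ^ 2 := by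
        gcongr; exact norm_inner_offDiagOp_adjoint_le T₁ T₂ z
    _ ≤ ‖x‖ ^ 2 * (‖T₁ y‖ ^ 2 + ‖T₂ y‖ ^ 2 + 2 * ‖⟪T₁ y, T₂ y⟫_ℂ‖) :=
        sq_norm_inner_add_norm_inner_le _ _ _
    _ ≤ ‖x‖ ^ 2 * (2 * ‖y‖ ^ 2 * (N₁ + N₂)) := by gcongr; linarith
    _ ≤ 1 / 2 * (N₁ + N₂) := by
        have hxy' : 4 * (‖x‖ ^ 2 * ‖y‖ ^ 2) ≤ 1 := by nlinarith [sq_nonneg (‖x‖ ^ 2 - ‖y‖ ^ 2)]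
        nlinarith [mul_le_mul_of_nonneg_right hxy' hN]
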